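/- arXiv:1903.06983 — 7 statements merged into one kernel-verified Lean document; each statement's English description precedes it below -/
import Mathlib

section
/- Let p1, p0, q1, q0 : ℝ × ℝ → ℝ be arbitrary functions and define f(x,y,z) = z² + p1(x,y)·z + p0(x,y) and g(x,y,z) = z² + q1(x,y)·z + q0(x,y). Then the image under the projection Π(x,y,z) = (x,y) of the set {(x,y,z) ∈ ℝ³ : f(x,y,z) = 0 and g(x,y,z) = 0} is exactly the set {(x,y) ∈ ℝ² : S0(x,y) = 0, Δ1(x,y) ≥ 0, Δ2(x,y) ≥ 0}, where S0(x,y) = (p0(x,y) − q0(x,y))² − (p1(x,y) − q1(x,y))·(p0(x,y)·q1(x,y) − q0(x,y)·p1(x,y)), Δ1(x,y) = p1(x,y)² − 4·p0(x,y) and Δ2(x,y) = q1(x,y)² − 4·q0(x,y). -/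
/-!
A common real root `z` of `z² + a z + b` and `z² + c z + d` is a root of their difference
`(a - c) z + (b - d)`. If `a ≠ c` this forces `z = (d - b) / (a - c)`, and substituting this
value into either quadratic gives, up to the factor `(a - c)²`, the resultant
`(b - d)² - (a - c)(b c - d a)`. If `a = c`, the resultant vanishes exactly when the two
quadratics coincide, and a common root then exists iff the discriminant is nonnegative.
-/

namespace MonicQuadratic

/-- The resultant of `z² + a z + b` and `z² + c z + d`. -/
def resultant {R : Type*} [CommRing R] (a b c d : R) : R :=
  (b - d) ^ 2 - (a - c) * (b * c - d * a)

theorem resultant_eq_zero_of_common_root {R : Type*} [CommRing R] {a b c d z : R}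
    (hf : z ^ 2 + a * z + b = 0) (hg : z ^ 2 + c * z + d = 0) : resultant a b c d = 0 := by
  unfold resultant
  linear_combination
    ((a - c) ^ 2 - ((a - c) * z + d - b + a ^ 2 - a * c)) * hf +
      ((a - c) * z + d - b + a ^ 2 - a * c) * hg

theorem discrim_nonneg_of_root {R : Type*} [CommRing R] [LinearOrder R] [IsStrictOrderedRing R]
    {a b z : R} (hf : z ^ 2 + a * z + b = 0) : 0 ≤ a ^ 2 - 4 * b := by
  have hsq : a ^ 2 - 4 * b = (2 * z + a) ^ 2 := by linear_combination (-4) * hf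
  exact hsq ▸ sq_nonneg _

theorem exists_root_of_discrim_nonneg {a b : ℝ} (hΔ : 0 ≤ a ^ 2 - 4 * b) :
    ∃ z : ℝ, z ^ 2 + a * z + b = 0 :=
  ⟨(-a + √(a ^ 2 - 4 * b)) / 2, by linear_combination Real.sq_sqrt hΔ / 4⟩

theorem common_root_of_resultant_eq_zero {K : Type*} [Field K] {a b c d : K} (hac : a ≠ c)
    (hR : resultant a b c d = 0) :
    ((d - b) / (a - c)) ^ 2 + a * ((d - b) / (a - c)) + b = 0 ∧
      ((d - b) / (a - c)) ^ 2 + c * ((d - b) / (a - c)) + d = 0 := by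
  have hac' : a - c ≠ 0 := sub_ne_zero.mpr hac
  unfold resultant at hR
  constructor <;>
  · field_simp
    linear_combination hR

theorem eq_of_resultant_eq_zero_of_eq {R : Type*} [CommRing R] [IsReduced R] {a b c d : R}
    (hac : a = c) (hR : resultant a b c d = 0) : b = d := by
  subst hac
  unfold resultant at hR
  exact sub_eq_zero.mp (pow_eq_zero_iff two_ne_zero |>.mp (by linear_combination hR))

theorem exists_common_root_iff {a b c d : ℝ} :
    (∃ z : ℝ, z ^ 2 + a * z + b = 0 ∧ z ^ 2 + c * z + d = 0) ↔
      resultant a b c d = 0 ∧ 0 ≤ a ^ 2 - 4 * b ∧ 0 ≤ c ^ 2 - 4 * d := by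
  constructor
  · rintro ⟨z, hf, hg⟩
    exact ⟨resultant_eq_zero_of_common_root hf hg, discrim_nonneg_of_root hf,
      discrim_nonneg_of_root hg⟩
  · rintro ⟨hR, hΔ, -⟩
    by_cases hac : a = c
    · obtain rfl := eq_of_resultant_eq_zero_of_eq hac hR
      subst hac
      obtain ⟨z, hz⟩ := exists_root_of_discrim_nonneg hΔ
      exact ⟨z, hz, hz⟩
    · exact ⟨_, common_root_of_resultant_eq_zero hac hR⟩

end MonicQuadratic

/-- The projection onto the (x,y)-plane of the intersection of the two quadrics
    f = z² + p1(x,y)z + p0(x,y) and g = z² + q1(x,y)z + q0(x,y) is exactly the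
    set where the resultant S0 vanishes and both discriminants are nonnegative. -/
theorem stmt_0 (p1 p0 q1 q0 : ℝ × ℝ → ℝ) :
    (fun w : ℝ × ℝ × ℝ => (w.1, w.2.1)) ''
      {w : ℝ × ℝ × ℝ |
        w.2.2 ^ 2 + p1 (w.1, w.2.1) * w.2.2 + p0 (w.1, w.2.1) = 0 ∧
        w.2.2 ^ 2 + q1 (w.1, w.2.1) * w.2.2 + q0 (w.1, w.2.1) = 0} =
    {v : ℝ × ℝ |
        (p0 v - q0 v) ^ 2 - (p1 v - q1 v) * (p0 v * q1 v - q0 v * p1 v) = 0 ∧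
        p1 v ^ 2 - 4 * p0 v ≥ 0 ∧
        q1 v ^ 2 - 4 * q0 v ≥ 0} := by
  ext v
  refine Iff.trans ?_ MonicQuadratic.exists_common_root_iff
  constructor
  · rintro ⟨⟨x, y, z⟩, hz, rfl⟩
    exact ⟨z, hz⟩
  · rintro ⟨z, hz⟩
    exact ⟨(v.1, v.2, z), hz, rfl⟩
end

section
/- Let p1, p0, q1, q0 be polynomials in ℝ[x,y] (formally, MvPolynomial (Fin 2) ℝ) and define S0 = (p0 − q0)² − (p1 − q1)·(p0·q1 − q0·p1). If v : Fin 2 → ℝ satisfies S0(v) = 0 and p1(v) = q1(v), then (∂S0/∂x)(v) = 0 and (∂S0/∂y)(v) = 0; that is, v is a singular point of the curve S0 = 0. -/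
open MvPolynomial

/-- A point of the cutcurve lying on the line p1 = q1 is a singular point
    of the cutcurve. -/
theorem stmt_4 (p1 p0 q1 q0 : MvPolynomial (Fin 2) ℝ)
    (S0 : MvPolynomial (Fin 2) ℝ)
    (hS0 : S0 = (p0 - q0) ^ 2 - (p1 - q1) * (p0 * q1 - q0 * p1))
    (v : Fin 2 → ℝ)
    (hv : eval v S0 = 0)
    (h1 : eval v p1 = eval v q1) :
    eval v (pderiv (0 : Fin 2) S0) = 0 ∧ eval v (pderiv (1 : Fin 2) S0) = 0 := by
  subst hS0
  simp only [map_sub, map_mul, map_pow] at hv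
  rw [h1] at hv
  have hp0 : eval v p0 = eval v q0 := by
    have h2 : (eval v p0 - eval v q0) ^ 2 = 0 := by linarith
    have := pow_eq_zero_iff (n := 2) (by norm_num) |>.mp h2
    linarith
  constructor <;>
  · simp only [map_sub, map_mul, map_pow, Derivation.leibniz, Derivation.leibniz_pow,
      smul_eq_mul, map_ofNat, map_add, nsmul_eq_mul, pow_one, Nat.cast_ofNat] <;>
    rw [h1, hp0] <;> ring
end

section
/- Let p1, p0, q1, q0 be polynomials in ℝ[x,y] (formally, MvPolynomial (Fin 2) ℝ) and define S0 = (p0 − q0)² − (p1 − q1)·(p0·q1 − q0·p1). Let v : Fin 2 → ℝ satisfy S0(v) = 0 and p1(v) ≠ q1(v), and set z0 = −(q0(v) − p0(v)) / (q1(v) − p1(v)). Then (∂S0/∂x)(v) = (q1(v) − p1(v)) · (Fx·Gz − Fz·Gx) and (∂S0/∂y)(v) = (q1(v) − p1(v)) · (Fy·Gz − Fz·Gy), where Fx = z0·(∂p1/∂x)(v) + (∂p0/∂x)(v), Fy = z0·(∂p1/∂y)(v) + (∂p0/∂y)(v), Fz = 2·z0 + p1(v), and Gx, Gy, Gz are defined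 analogously with q1, q0 in place of p1, p0. -/
/-!
At a point `v` where the resultant `S0` of `f = z² + p₁z + p₀` and `g = z² + q₁z + q₀` vanishes
and `p₁(v) ≠ q₁(v)`, the number `z₀` is the common root of `f(v, ·)` and `g(v, ·)`: it is the root
of `f - g`, which is linear in `z`. Differentiating `S0` by the Leibniz rule and eliminating
`z₀²` and `z₀ (q₁ - p₁)` with `f(v, z₀) = g(v, z₀) = 0` gives the factorization.
-/

open MvPolynomial

/-- The resultant with respect to `z` of `z² + p₁ z + p₀` and `z² + q₁ z + q₀`. -/
def quadResultant {R : Type*} [CommRing R] (p1 p0 q1 q0 : R) : R :=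
  (p0 - q0) ^ 2 - (p1 - q1) * (p0 * q1 - q0 * p1)

theorem map_quadResultant {R S : Type*} [CommRing R] [CommRing S] (φ : R →+* S)
    (p1 p0 q1 q0 : R) :
    φ (quadResultant p1 p0 q1 q0) = quadResultant (φ p1) (φ p0) (φ q1) (φ q0) := by
  simp [quadResultant]

theorem quadResultant_eq_zero_common_root {K : Type*} [Field K] {a b c d z : K} (hac : a ≠ c)
    (hres : quadResultant a b c d = 0) (hz : z = -(d - b) / (c - a)) :
    z ^ 2 + a * z + b = 0 ∧ z ^ 2 + c * z + d = 0 := by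
  have hca : c - a ≠ 0 := sub_ne_zero.mpr hac.symm
  have hlin : z * (c - a) = b - d := by rw [hz]; field_simp; ring
  have hf : (z ^ 2 + a * z + b) * (c - a) ^ 2 = 0 := by
    unfold quadResultant at hres
    linear_combination (z * (c - a) + (b - d) + a * (c - a)) * hlin + hres
  have hf' : z ^ 2 + a * z + b = 0 := by simpa [hca] using hf
  exact ⟨hf', by linear_combination hf' + hlin⟩

theorem pderiv_quadResultant {σ R : Type*} [CommRing R] (i : σ)
    (p1 p0 q1 q0 : MvPolynomial σ R) :
    pderiv i (quadResultant p1 p0 q1 q0) =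
      2 * (p0 - q0) * (pderiv i p0 - pderiv i q0)
        - (pderiv i p1 - pderiv i q1) * (p0 * q1 - q0 * p1)
        - (p1 - q1) * (pderiv i p0 * q1 + p0 * pderiv i q1
            - (pderiv i q0 * p1 + q0 * pderiv i p1)) := by
  simp only [quadResultant, map_sub, Derivation.leibniz_pow, Derivation.leibniz,
    smul_eq_mul]
  ring

/-- The left side is the image of `quadResultant a b c d` under a derivation sending
`a, b, c, d` to `a', b', c', d'`. -/
theorem quadResultant_derivative_eq_of_common_root {R : Type*} [CommRing R]
    {a b c d z : R} (a' b' c' d' : R)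
    (hf : z ^ 2 + a * z + b = 0) (hg : z ^ 2 + c * z + d = 0) :
    2 * (b - d) * (b' - d') - (a' - c') * (b * c - d * a)
        - (a - c) * (b' * c + b * c' - (d' * a + d * a'))
      = (c - a) * ((z * a' + b') * (2 * z + c) - (2 * z + a) * (z * c' + d')) := by
  linear_combination ((2 * c' - 2 * a') * c + c * a' + 2 * b' - a * c' - 2 * d') * hf
    + ((2 * a' - 2 * c') * a - c * a' - 2 * b' + a * c' + 2 * d') * hg

theorem eval_pderiv_quadResultant_of_common_root {σ R : Type*} [CommRing R]
    (p1 p0 q1 q0 : MvPolynomial σ R) (v : σ → R) (i : σ) {z : R}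
    (hf : z ^ 2 + eval v p1 * z + eval v p0 = 0) (hg : z ^ 2 + eval v q1 * z + eval v q0 = 0) :
    eval v (pderiv i (quadResultant p1 p0 q1 q0)) =
      (eval v q1 - eval v p1) *
        ((z * eval v (pderiv i p1) + eval v (pderiv i p0)) * (2 * z + eval v q1)
          - (2 * z + eval v p1) * (z * eval v (pderiv i q1) + eval v (pderiv i q0))) := by
  rw [pderiv_quadResultant]
  simp only [map_sub, map_mul, map_add, map_ofNat]
  exact quadResultant_derivative_eq_of_common_root _ _ _ _ hf hg

/-- Factorization of the partial derivatives of S0 at a point of the cutcurve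
    outside the line p1 = q1. -/
theorem stmt_6 (p1 p0 q1 q0 : MvPolynomial (Fin 2) ℝ)
    (S0 : MvPolynomial (Fin 2) ℝ)
    (hS0 : S0 = (p0 - q0) ^ 2 - (p1 - q1) * (p0 * q1 - q0 * p1))
    (v : Fin 2 → ℝ)
    (hv : eval v S0 = 0)
    (hne : eval v p1 ≠ eval v q1)
    (z0 : ℝ)
    (hz0 : z0 = -(eval v q0 - eval v p0) / (eval v q1 - eval v p1))
    (Fx Fy Fz Gx Gy Gz : ℝ)
    (hFx : Fx = z0 * eval v (pderiv (0 : Fin 2) p1) + eval v (pderiv (0 : Fin 2) p0))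
    (hFy : Fy = z0 * eval v (pderiv (1 : Fin 2) p1) + eval v (pderiv (1 : Fin 2) p0))
    (hFz : Fz = 2 * z0 + eval v p1)
    (hGx : Gx = z0 * eval v (pderiv (0 : Fin 2) q1) + eval v (pderiv (0 : Fin 2) q0))
    (hGy : Gy = z0 * eval v (pderiv (1 : Fin 2) q1) + eval v (pderiv (1 : Fin 2) q0))
    (hGz : Gz = 2 * z0 + eval v q1) :
    eval v (pderiv (0 : Fin 2) S0) = (eval v q1 - eval v p1) * (Fx * Gz - Fz * Gx) ∧
    eval v (pderiv (1 : Fin 2) S0) = (eval v q1 - eval v p1) * (Fy * Gz - Fz * Gy) := by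
  obtain rfl : S0 = quadResultant p1 p0 q1 q0 := hS0
  rw [map_quadResultant] at hv
  obtain ⟨hf, hg⟩ := quadResultant_eq_zero_common_root hne hv hz0
  subst Fx Fy Fz Gx Gy Gz
  exact ⟨eval_pderiv_quadResultant_of_common_root p1 p0 q1 q0 v 0 hf hg,
    eval_pderiv_quadResultant_of_common_root p1 p0 q1 q0 v 1 hf hg⟩
end

section
/- Let p1, p0, q1, q0 be polynomials in ℝ[x,y] (formally, MvPolynomial (Fin 2) ℝ) and define S0 = (p0 − q0)² − (p1 − q1)·(p0·q1 − q0·p1). Suppose v : Fin 2 → ℝ satisfies S0(v) = 0, (∂S0/∂x)(v) = 0, (∂S0/∂y)(v) = 0 and p1(v) ≠ q1(v), and set z0 = −(q0(v) − p0(v)) / (q1(v) − p1(v)). Then Fx·Gz − Fz·Gx = 0 and Fy·Gz − Fz·Gy = 0, where Fx = z0·(∂p1/∂x)(v) + (∂p0/∂x)(v), Fy = z0·(∂p1/∂y)(v) + (∂p0/∂y)(v), Fz = 2·z0 + p1(v), and Gx, Gy, Gz are defined analogously with q1, q0 in place of p1, p0. -/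
open MvPolynomial

/-!
Write `f(z) = z² + p1 z + p0`, `g(z) = z² + q1 z + q0` and `l = f - g = (p1 - q1) z + (p0 - q0)`.
For every `z` the resultant satisfies `S0 = (p1 - q1)² g(z) + l(z) (l(z) - (p1 - q1) g'(z))`.
At `v`, `z0` is the root of `l`, so `S0(v) = 0` and `p1(v) ≠ q1(v)` make `z0` a common root of
`f` and `g`. Differentiating the identity at the constant `z0` then gives
`∂S0(v) = (p1(v) - q1(v)) (Fz G∂ - F∂ Gz)`, so the vanishing of `∂S0(v)` forces the minors
to vanish.
-/

theorem quadratic_resultant_eq {R : Type*} [CommRing R] (p1 p0 q1 q0 z : R) :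
    (p0 - q0) ^ 2 - (p1 - q1) * (p0 * q1 - q0 * p1) =
      (p1 - q1) ^ 2 * (z ^ 2 + q1 * z + q0) +
        ((z ^ 2 + p1 * z + p0) - (z ^ 2 + q1 * z + q0)) *
          ((z ^ 2 + p1 * z + p0) - (z ^ 2 + q1 * z + q0) - (p1 - q1) * (2 * z + q1)) := by
  ring

theorem common_root_of_quadratic_resultant_eq_zero {R : Type*} [CommRing R] [NoZeroDivisors R]
    {p1 p0 q1 q0 z : R} (hS : (p0 - q0) ^ 2 - (p1 - q1) * (p0 * q1 - q0 * p1) = 0)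
    (hne : p1 ≠ q1) (hz : (p1 - q1) * z + (p0 - q0) = 0) :
    z ^ 2 + p1 * z + p0 = 0 ∧ z ^ 2 + q1 * z + q0 = 0 := by
  have hl : (z ^ 2 + p1 * z + p0) - (z ^ 2 + q1 * z + q0) = 0 := by linear_combination hz
  have hg : z ^ 2 + q1 * z + q0 = 0 := by
    rw [quadratic_resultant_eq p1 p0 q1 q0 z, hl, zero_mul, add_zero] at hS
    exact (mul_eq_zero.mp hS).resolve_left (pow_ne_zero 2 (sub_ne_zero.mpr hne))
  exact ⟨by linear_combination hl + hg, hg⟩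

theorem eval_pderiv_quadratic_resultant {R σ : Type*} [CommRing R]
    (p1 p0 q1 q0 : MvPolynomial σ R) (v : σ → R) (i : σ) {z : R}
    (hf : z ^ 2 + eval v p1 * z + eval v p0 = 0) (hg : z ^ 2 + eval v q1 * z + eval v q0 = 0) :
    eval v (pderiv i ((p0 - q0) ^ 2 - (p1 - q1) * (p0 * q1 - q0 * p1))) =
      (eval v p1 - eval v q1) *
        ((2 * z + eval v p1) * (z * eval v (pderiv i q1) + eval v (pderiv i q0)) -
          (z * eval v (pderiv i p1) + eval v (pderiv i p0)) * (2 * z + eval v q1)) := by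
  rw [quadratic_resultant_eq p1 p0 q1 q0 (C z)]
  have h2 : pderiv i (2 : MvPolynomial σ R) = 0 := by exact_mod_cast (pderiv i).map_natCast 2
  simp only [map_add, map_sub, map_mul, map_pow, Derivation.leibniz, Derivation.leibniz_pow, h2,
    pderiv_C, smul_eq_mul, nsmul_eq_mul, eval_C, eval_ofNat, Nat.cast_ofNat, map_zero, mul_zero,
    add_zero]
  set c := eval v p1 - eval v q1
  set dc := eval v (pderiv i p1) - eval v (pderiv i q1)
  set dl := (z * eval v (pderiv i p1) + eval v (pderiv i p0)) -
    (z * eval v (pderiv i q1) + eval v (pderiv i q0))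
  linear_combination (2 * c * dc) * hg +
    (2 * dl - dc * (2 * z + eval v q1) - c * eval v (pderiv i q1)) * (hf - hg)

/-- At a singular point of the cutcurve outside the line p1 = q1, the 2×2
    minors of the gradients of f and g involving the z-derivative vanish. -/
theorem stmt_7 (p1 p0 q1 q0 : MvPolynomial (Fin 2) ℝ)
    (S0 : MvPolynomial (Fin 2) ℝ)
    (hS0 : S0 = (p0 - q0) ^ 2 - (p1 - q1) * (p0 * q1 - q0 * p1))
    (v : Fin 2 → ℝ)
    (hv : eval v S0 = 0)
    (hvx : eval v (pderiv (0 : Fin 2) S0) = 0)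
    (hvy : eval v (pderiv (1 : Fin 2) S0) = 0)
    (hne : eval v p1 ≠ eval v q1)
    (z0 : ℝ)
    (hz0 : z0 = -(eval v q0 - eval v p0) / (eval v q1 - eval v p1))
    (Fx Fy Fz Gx Gy Gz : ℝ)
    (hFx : Fx = z0 * eval v (pderiv (0 : Fin 2) p1) + eval v (pderiv (0 : Fin 2) p0))
    (hFy : Fy = z0 * eval v (pderiv (1 : Fin 2) p1) + eval v (pderiv (1 : Fin 2) p0))
    (hFz : Fz = 2 * z0 + eval v p1)
    (hGx : Gx = z0 * eval v (pderiv (0 : Fin 2) q1) + eval v (pderiv (0 : Fin 2) q0))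
    (hGy : Gy = z0 * eval v (pderiv (1 : Fin 2) q1) + eval v (pderiv (1 : Fin 2) q0))
    (hGz : Gz = 2 * z0 + eval v q1) :
    Fx * Gz - Fz * Gx = 0 ∧ Fy * Gz - Fz * Gy = 0 := by
  subst hS0 hFx hFy hFz hGx hGy hGz
  have hc : eval v p1 - eval v q1 ≠ 0 := sub_ne_zero.mpr hne
  have hz : (eval v p1 - eval v q1) * z0 + (eval v p0 - eval v q0) = 0 := by
    rw [hz0]
    field_simp [sub_ne_zero.mpr hne.symm]
    ring
  have hS : eval v ((p0 - q0) ^ 2 - (p1 - q1) * (p0 * q1 - q0 * p1)) = 0 := hv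
  simp only [map_sub, map_mul, map_pow] at hS
  obtain ⟨hf, hg⟩ := common_root_of_quadratic_resultant_eq_zero hS hne hz
  rw [eval_pderiv_quadratic_resultant p1 p0 q1 q0 v _ hf hg] at hvx hvy
  constructor
  · linear_combination -(mul_eq_zero.mp hvx).resolve_left hc
  · linear_combination -(mul_eq_zero.mp hvy).resolve_left hc
end

section
/- There exist no real numbers p1, p0, q1, q0 such that simultaneously S0 = 0, p1 ≠ q1, Δ1 = 0 and Δ2 = 0, where S0 = (p0 − q0)² − (p1 − q1)·(p0·q1 − q0·p1), Δ1 = p1² − 4·p0 and Δ2 = q1² − 4·q0. (In particular, the cutcurve and the two silhouette curves have no common point outside the line p1(x,y) = q1(x,y).) -/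
/-- The system S0 = 0, p1 ≠ q1, Δ1 = 0, Δ2 = 0 has no real solutions. -/
theorem stmt_16 :
    ¬ ∃ p1 p0 q1 q0 : ℝ,
        (p0 - q0) ^ 2 - (p1 - q1) * (p0 * q1 - q0 * p1) = 0 ∧
        p1 ≠ q1 ∧
        p1 ^ 2 - 4 * p0 = 0 ∧
        q1 ^ 2 - 4 * q0 = 0 := by
  rintro ⟨p1, p0, q1, q0, hS, hne, h1, h2⟩
  have hp : p0 = p1 ^ 2 / 4 := by linarith
  have hq : q0 = q1 ^ 2 / 4 := by linarith
  subst hp hq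
  have : p1 - q1 ≠ 0 := sub_ne_zero.mpr hne
  have h4 : (p1 - q1) ^ 4 = 0 := by nlinarith [hS]
  exact this (by nlinarith [pow_eq_zero_iff (n := 4) (by norm_num) |>.mp h4])
end

section
/- Let p1, p0, q1, q0 be real numbers with q1 ≠ p1 such that S0 = 0, Δ1 ≥ 0 and Δ2 ≥ 0, where S0 = (p0 − q0)² − (p1 − q1)·(p0·q1 − q0·p1), Δ1 = p1² − 4·p0 and Δ2 = q1² − 4·q0. Then z0 = (p0 − q0)/(q1 − p1) is the unique real number z satisfying z² + p1·z + p0 = 0 and z² + q1·z + q0 = 0. -/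
/-! The difference of the two quadratics is the first subresultant
`S₁(z) = (q₁ - p₁) z + (q₀ - p₀)`, so every common root is its root `z₀`; conversely, clearing
the denominator `(q₁ - p₁)²` in `z₀² + p₁ z₀ + p₀` gives exactly the resultant `S₀`. -/

section CommonRoot

variable {K : Type*} [Field K] {p1 p0 q1 q0 : K}

theorem eq_div_of_common_quadratic_root (hne : q1 ≠ p1) {z : K}
    (hp : z ^ 2 + p1 * z + p0 = 0) (hq : z ^ 2 + q1 * z + q0 = 0) :
    z = (p0 - q0) / (q1 - p1) := by
  rw [eq_div_iff (sub_ne_zero.mpr hne)]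
  linear_combination hq - hp

theorem quadratic_eq_zero_at_div_of_resultant_eq_zero (hne : q1 ≠ p1)
    (hS0 : (p0 - q0) ^ 2 - (p1 - q1) * (p0 * q1 - q0 * p1) = 0) :
    ((p0 - q0) / (q1 - p1)) ^ 2 + p1 * ((p0 - q0) / (q1 - p1)) + p0 = 0 := by
  have hd : q1 - p1 ≠ 0 := sub_ne_zero.mpr hne
  field_simp
  linear_combination hS0

theorem sub_mul_div_add_sub_eq_zero (hne : q1 ≠ p1) :
    (q1 - p1) * ((p0 - q0) / (q1 - p1)) + (q0 - p0) = 0 := by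
  rw [mul_div_cancel₀ _ (sub_ne_zero.mpr hne)]
  ring

end CommonRoot

theorem stmt_17_general (p1 p0 q1 q0 : ℝ) (hne : q1 ≠ p1)
    (hS0 : (p0 - q0) ^ 2 - (p1 - q1) * (p0 * q1 - q0 * p1) = 0) :
    ((p0 - q0) / (q1 - p1)) ^ 2 + p1 * ((p0 - q0) / (q1 - p1)) + p0 = 0 ∧
    ((p0 - q0) / (q1 - p1)) ^ 2 + q1 * ((p0 - q0) / (q1 - p1)) + q0 = 0 ∧
    ∀ z : ℝ, z ^ 2 + p1 * z + p0 = 0 → z ^ 2 + q1 * z + q0 = 0 →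
      z = (p0 - q0) / (q1 - p1) := by
  have hp := quadratic_eq_zero_at_div_of_resultant_eq_zero hne hS0
  have hS1 := sub_mul_div_add_sub_eq_zero (p0 := p0) (q0 := q0) hne
  exact ⟨hp, by linear_combination hp + hS1,
    fun _ hp hq ↦ eq_div_of_common_quadratic_root hne hp hq⟩

/-- At a point of the cutcurve with q1 ≠ p1, the lifting
    z0 = (p0 − q0)/(q1 − p1) is the unique common real root of the two
    monic quadratics. -/
theorem stmt_17 (p1 p0 q1 q0 : ℝ) (hne : q1 ≠ p1)
    (hS0 : (p0 - q0) ^ 2 - (p1 - q1) * (p0 * q1 - q0 * p1) = 0)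
    (hD1 : p1 ^ 2 - 4 * p0 ≥ 0)
    (hD2 : q1 ^ 2 - 4 * q0 ≥ 0) :
    ((p0 - q0) / (q1 - p1)) ^ 2 + p1 * ((p0 - q0) / (q1 - p1)) + p0 = 0 ∧
    ((p0 - q0) / (q1 - p1)) ^ 2 + q1 * ((p0 - q0) / (q1 - p1)) + q0 = 0 ∧
    ∀ z : ℝ, z ^ 2 + p1 * z + p0 = 0 → z ^ 2 + q1 * z + q0 = 0 →
      z = (p0 - q0) / (q1 - p1) :=
  stmt_17_general p1 p0 q1 q0 hne hS0
end

section
/- Let p1, p0, q1, q0 : ℝ × ℝ → ℝ be arbitrary functions and define f(x,y,z) = z² + p1(x,y)·z + p0(x,y) and g(x,y,z) = q1(x,y)·z + q0(x,y). Then the image under the projection Π(x,y,z) = (x,y) of the set {(x,y,z) ∈ ℝ³ : f(x,y,z) = 0 and g(x,y,z) = 0} is the union of the two sets {(x,y) ∈ ℝ² : S0(x,y) = 0, p1(x,y)² − 4·p0(x,y) ≥ 0, q1(x,y) ≠ 0} and {(x,y) ∈ ℝ² : S0(x,y) = 0, p1(x,y)² − 4·p0(x,y) ≥ 0, q1(x,y)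 = 0, q0(x,y) = 0}, where S0(x,y) = q0(x,y)² − p1(x,y)·q1(x,y)·q0(x,y) + p0(x,y)·q1(x,y)² is the resultant of f and g with respect to z. -/
/-! When `q1 ≠ 0` the only common root candidate is `z = -q0/q1`, and `q1² f(-q0/q1) = S0`, so
`S0 = 0` decides it. When `q1 = 0`, `g` has a root only if it vanishes identically (`q0 = 0`), and then
only the real solvability of `f`, i.e. `p1² - 4 p0 ≥ 0`, matters. -/

theorem resultant_eq_of_linear_root {R : Type*} [CommRing R] {p1 p0 q1 q0 z : R}
    (hg : q1 * z + q0 = 0) :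
    q0 ^ 2 - p1 * q1 * q0 + p0 * q1 ^ 2 = q1 ^ 2 * (z ^ 2 + p1 * z + p0) := by
  linear_combination (q0 - q1 * z - p1 * q1) * hg

theorem exists_monic_quadratic_root_iff {b c : ℝ} :
    (∃ z, z ^ 2 + b * z + c = 0) ↔ 0 ≤ b ^ 2 - 4 * c := by
  constructor
  · rintro ⟨z, hz⟩
    nlinarith [sq_nonneg (2 * z + b)]
  · intro hd
    refine ⟨(-b + √(b ^ 2 - 4 * c)) / 2, ?_⟩
    linear_combination Real.sq_sqrt hd / 4

theorem exists_common_root_iff {p1 p0 q1 q0 : ℝ} :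
    (∃ z, z ^ 2 + p1 * z + p0 = 0 ∧ q1 * z + q0 = 0) ↔
      q0 ^ 2 - p1 * q1 * q0 + p0 * q1 ^ 2 = 0 ∧ 0 ≤ p1 ^ 2 - 4 * p0 ∧
        (q1 ≠ 0 ∨ q1 = 0 ∧ q0 = 0) := by
  constructor
  · rintro ⟨z, hf, hg⟩
    refine ⟨by rw [resultant_eq_of_linear_root hg, hf, mul_zero],
      exists_monic_quadratic_root_iff.mp ⟨z, hf⟩, ?_⟩
    by_cases hq1 : q1 = 0
    · exact .inr ⟨hq1, by simpa [hq1] using hg⟩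
    · exact .inl hq1
  · rintro ⟨hS, hd, hq1 | ⟨hq1, hq0⟩⟩
    · have hg : q1 * (-q0 / q1) + q0 = 0 := by field_simp; ring
      refine ⟨-q0 / q1, ?_, hg⟩
      rw [resultant_eq_of_linear_root hg] at hS
      exact (mul_eq_zero.mp hS).resolve_left (pow_ne_zero 2 hq1)
    · obtain ⟨z, hz⟩ := exists_monic_quadratic_root_iff.mpr hd
      exact ⟨z, hz, by simp [hq1, hq0]⟩

/-- Projection of the intersection of a quadric-in-z surface with a
    linear-in-z surface. -/
theorem stmt_18 (p1 p0 q1 q0 : ℝ × ℝ → ℝ) :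
    (fun w : ℝ × ℝ × ℝ => (w.1, w.2.1)) ''
      {w : ℝ × ℝ × ℝ |
        w.2.2 ^ 2 + p1 (w.1, w.2.1) * w.2.2 + p0 (w.1, w.2.1) = 0 ∧
        q1 (w.1, w.2.1) * w.2.2 + q0 (w.1, w.2.1) = 0} =
    {v : ℝ × ℝ |
        q0 v ^ 2 - p1 v * q1 v * q0 v + p0 v * q1 v ^ 2 = 0 ∧
        p1 v ^ 2 - 4 * p0 v ≥ 0 ∧
        q1 v ≠ 0} ∪
    {v : ℝ × ℝ |
        q0 v ^ 2 - p1 v * q1 v * q0 v + p0 v * q1 v ^ 2 = 0 ∧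
        p1 v ^ 2 - 4 * p0 v ≥ 0 ∧
        q1 v = 0 ∧ q0 v = 0} := by
  ext v
  have hfiber : v ∈ (fun w : ℝ × ℝ × ℝ => (w.1, w.2.1)) ''
      {w | w.2.2 ^ 2 + p1 (w.1, w.2.1) * w.2.2 + p0 (w.1, w.2.1) = 0 ∧
        q1 (w.1, w.2.1) * w.2.2 + q0 (w.1, w.2.1) = 0} ↔
      ∃ z, z ^ 2 + p1 v * z + p0 v = 0 ∧ q1 v * z + q0 v = 0 := by
    constructor
    · rintro ⟨⟨x, y, z⟩, hw, rfl⟩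
      exact ⟨z, hw⟩
    · rintro ⟨z, hz⟩
      exact ⟨(v.1, v.2, z), hz, rfl⟩
  rw [hfiber, exists_common_root_iff]
  simp only [Set.mem_union, Set.mem_ofPred_eq, ge_iff_le]
  tauto
end
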